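/- arXiv:2111.02344 — 2 statements merged into one kernel-verified Lean document; each statement's English description precedes it below -/
import Mathlib

section
/- The Frank copula is 2-increasing: for θ ≠ 0 and 0 ≤ u₁ ≤ u₂ ≤ 1, 0 ≤ v₁ ≤ v₂ ≤ 1, C_θ(u₂,v₂) - C_θ(u₂,v₁) - C_θ(u₁,v₂) + C_θ(u₁,v₁) ≥ 0. -/
noncomputable def frankCopula (θ u v : ℝ) : ℝ :=
  -(1/θ) * Real.log (1 + (Real.exp (-θ*u) - 1) * (Real.exp (-θ*v) - 1) / (Real.exp (-θ) - 1))

lemma frank_diff_mul (D a₁ a₂ b₁ b₂ : ℝ) (hD : D ≠ 0) :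
    ((1 + a₂*b₁/D)*(1 + a₁*b₂/D) - (1 + a₂*b₂/D)*(1 + a₁*b₁/D)) * D
      = (a₁-a₂)*(b₂-b₁) := by
  field_simp
  ring

lemma frank_pos_of_pos (D a b : ℝ) (hD : 0 < D) (ha : 0 ≤ a) (hb : 0 ≤ b) :
    0 < 1 + a*b/D := by
  have : 0 ≤ a*b/D := div_nonneg (mul_nonneg ha hb) hD.le
  linarith

lemma frank_pos_of_neg (D a b : ℝ) (hD : D < 0) (haD : D ≤ a) (ha : a ≤ 0)
    (hbD : D ≤ b) (hb : b ≤ 0) (h1D : 0 < 1 + D) : 0 < 1 + a*b/D := by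
  have hnum : D + a*b < 0 := by
    nlinarith [mul_nonneg (sub_nonneg.mpr haD) (neg_nonneg.mpr hb)]
  have hDne : D ≠ 0 := hD.ne
  have heq : 1 + a*b/D = (D + a*b)/D := by field_simp
  rw [heq]
  exact div_pos_of_neg_of_neg hnum hD

lemma frank_prod_le (D a₁ a₂ b₁ b₂ : ℝ) (hD : 0 < D) (ha : a₁ ≤ a₂) (hb : b₁ ≤ b₂) :
    (1 + a₂*b₁/D)*(1 + a₁*b₂/D) ≤ (1 + a₂*b₂/D)*(1 + a₁*b₁/D) := by
  have key := frank_diff_mul D a₁ a₂ b₁ b₂ hD.ne'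
  have h1 : (a₁-a₂)*(b₂-b₁) ≤ 0 :=
    mul_nonpos_iff.mpr (Or.inr ⟨by linarith, by linarith⟩)
  nlinarith

lemma frank_prod_le' (D a₁ a₂ b₁ b₂ : ℝ) (hD : D < 0) (ha : a₂ ≤ a₁) (hb : b₂ ≤ b₁) :
    (1 + a₂*b₂/D)*(1 + a₁*b₁/D) ≤ (1 + a₂*b₁/D)*(1 + a₁*b₂/D) := by
  have key := frank_diff_mul D a₁ a₂ b₁ b₂ hD.ne
  have h1 : (a₁-a₂)*(b₂-b₁) ≤ 0 :=
    mul_nonpos_iff.mpr (Or.inl ⟨by linarith, by linarith⟩)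
  nlinarith

lemma frank_main_pos (c A₂₂ A₂₁ A₁₂ A₁₁ : ℝ) (h22 : 0 < A₂₂) (h21 : 0 < A₂₁)
    (h12 : 0 < A₁₂) (h11 : 0 < A₁₁) (hc : 0 ≤ c) (hprod : A₂₂ * A₁₁ ≤ A₂₁ * A₁₂) :
    0 ≤ -c * Real.log A₂₂ - -c * Real.log A₂₁ - -c * Real.log A₁₂ + -c * Real.log A₁₁ := by
  have hlog : Real.log (A₂₂*A₁₁) ≤ Real.log (A₂₁*A₁₂) :=
    Real.log_le_log (mul_pos h22 h11) hprod
  rw [Real.log_mul h22.ne' h11.ne', Real.log_mul h21.ne' h12.ne'] at hlog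
  nlinarith [mul_nonneg hc (sub_nonneg.mpr hlog)]

lemma frank_main_neg (c A₂₂ A₂₁ A₁₂ A₁₁ : ℝ) (h22 : 0 < A₂₂) (h21 : 0 < A₂₁)
    (h12 : 0 < A₁₂) (h11 : 0 < A₁₁) (hc : c ≤ 0) (hprod : A₂₁ * A₁₂ ≤ A₂₂ * A₁₁) :
    0 ≤ -c * Real.log A₂₂ - -c * Real.log A₂₁ - -c * Real.log A₁₂ + -c * Real.log A₁₁ := by
  have hlog : Real.log (A₂₁*A₁₂) ≤ Real.log (A₂₂*A₁₁) :=
    Real.log_le_log (mul_pos h21 h12) hprod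
  rw [Real.log_mul h22.ne' h11.ne', Real.log_mul h21.ne' h12.ne'] at hlog
  nlinarith [mul_nonneg (neg_nonneg.mpr hc) (sub_nonneg.mpr hlog)]

/-- The Frank copula is 2-increasing. -/
theorem frank_two_increasing (θ : ℝ) (hθ : θ ≠ 0) (u₁ u₂ v₁ v₂ : ℝ)
    (hu₁ : 0 ≤ u₁) (hu : u₁ ≤ u₂) (hu₂ : u₂ ≤ 1)
    (hv₁ : 0 ≤ v₁) (hv : v₁ ≤ v₂) (hv₂ : v₂ ≤ 1) :
    0 ≤ frankCopula θ u₂ v₂ - frankCopula θ u₂ v₁ - frankCopula θ u₁ v₂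
      + frankCopula θ u₁ v₁ := by
  simp only [frankCopula]
  rcases lt_or_gt_of_ne hθ with hneg | hpos
  · -- θ < 0 : D > 0, each a,b in [0,D], exp term monotone increasing
    have hD : 0 < Real.exp (-θ) - 1 := by
      have : (1:ℝ) < Real.exp (-θ) := Real.one_lt_exp_iff.mpr (by linarith)
      linarith
    have bnd : ∀ x : ℝ, 0 ≤ x → x ≤ 1 → 0 ≤ Real.exp (-θ*x) - 1 := by
      intro x hx0 hx1
      have h := Real.exp_le_exp.mpr (show (0:ℝ) ≤ -θ*x by nlinarith)
      rw [Real.exp_zero] at h; linarith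
    have ha₁0 := bnd u₁ hu₁ (le_trans hu hu₂)
    have ha₂0 := bnd u₂ (le_trans hu₁ hu) hu₂
    have hb₁0 := bnd v₁ hv₁ (le_trans hv hv₂)
    have hb₂0 := bnd v₂ (le_trans hv₁ hv) hv₂
    have hmonA : Real.exp (-θ*u₁) - 1 ≤ Real.exp (-θ*u₂) - 1 := by
      have : Real.exp (-θ*u₁) ≤ Real.exp (-θ*u₂) := Real.exp_le_exp.mpr (by nlinarith)
      linarith
    have hmonB : Real.exp (-θ*v₁) - 1 ≤ Real.exp (-θ*v₂) - 1 := by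
      have : Real.exp (-θ*v₁) ≤ Real.exp (-θ*v₂) := Real.exp_le_exp.mpr (by nlinarith)
      linarith
    exact frank_main_neg (1/θ) _ _ _ _
      (frank_pos_of_pos _ _ _ hD ha₂0 hb₂0)
      (frank_pos_of_pos _ _ _ hD ha₂0 hb₁0)
      (frank_pos_of_pos _ _ _ hD ha₁0 hb₂0)
      (frank_pos_of_pos _ _ _ hD ha₁0 hb₁0)
      (le_of_lt (one_div_neg.mpr hneg))
      (frank_prod_le _ _ _ _ _ hD hmonA hmonB)
  · -- θ > 0 : D < 0
    have hD : Real.exp (-θ) - 1 < 0 := by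
      have : Real.exp (-θ) < 1 := Real.exp_lt_one_iff.mpr (by linarith)
      linarith
    have h1D : 0 < 1 + (Real.exp (-θ) - 1) := by
      have := Real.exp_pos (-θ); linarith
    have bnd : ∀ x : ℝ, 0 ≤ x → x ≤ 1 →
        Real.exp (-θ) - 1 ≤ Real.exp (-θ*x) - 1 ∧ Real.exp (-θ*x) - 1 ≤ 0 := by
      intro x hx0 hx1
      constructor
      · have h : Real.exp (-θ) ≤ Real.exp (-θ*x) := Real.exp_le_exp.mpr (by nlinarith)
        linarith
      · have h := Real.exp_le_exp.mpr (show -θ*x ≤ (0:ℝ) by nlinarith)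
        rw [Real.exp_zero] at h; linarith
    obtain ⟨ha₁D, ha₁0⟩ := bnd u₁ hu₁ (le_trans hu hu₂)
    obtain ⟨ha₂D, ha₂0⟩ := bnd u₂ (le_trans hu₁ hu) hu₂
    obtain ⟨hb₁D, hb₁0⟩ := bnd v₁ hv₁ (le_trans hv hv₂)
    obtain ⟨hb₂D, hb₂0⟩ := bnd v₂ (le_trans hv₁ hv) hv₂
    have hmonA : Real.exp (-θ*u₂) - 1 ≤ Real.exp (-θ*u₁) - 1 := by
      have : Real.exp (-θ*u₂) ≤ Real.exp (-θ*u₁) := Real.exp_le_exp.mpr (by nlinarith)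
      linarith
    have hmonB : Real.exp (-θ*v₂) - 1 ≤ Real.exp (-θ*v₁) - 1 := by
      have : Real.exp (-θ*v₂) ≤ Real.exp (-θ*v₁) := Real.exp_le_exp.mpr (by nlinarith)
      linarith
    exact frank_main_pos (1/θ) _ _ _ _
      (frank_pos_of_neg _ _ _ hD ha₂D ha₂0 hb₂D hb₂0 h1D)
      (frank_pos_of_neg _ _ _ hD ha₂D ha₂0 hb₁D hb₁0 h1D)
      (frank_pos_of_neg _ _ _ hD ha₁D ha₁0 hb₂D hb₂0 h1D)
      (frank_pos_of_neg _ _ _ hD ha₁D ha₁0 hb₁D hb₁0 h1D)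
      (le_of_lt (by positivity))
      (frank_prod_le' _ _ _ _ _ hD hmonA hmonB)
end

section
/- For the Frank copula, C_θ(u,v) is strictly increasing in θ for fixed (u,v) ∈ (0,1)²; in particular for θ > 0 one has C_θ(u,v) > uv and for θ < 0 one has C_θ(u,v) < uv. -/
/-- The Frank copula extended by continuity at θ = 0 to the independence copula uv. -/
noncomputable def frankCopulaExt (θ u v : ℝ) : ℝ :=
  if θ = 0 then u * v else frankCopula θ u v

/-!
Put `W_θ(x) = (e^{-θx} - 1) / (e^{-θ} - 1)` (and `W_0(x) = x`); then `c = C_θ(u,v)` is the point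
with `W_θ(c) = W_θ(u) W_θ(v)`. For `θ₁ < θ₂`, `c = C_{θ₁}(u,v)` and `u ≤ v`, we have `c < u`, and
`log W_{θ₁}` increases by the same amount `-log W_{θ₁}(v)` on `[c, u]` and on `[v, 1]`. Cauchy's
mean value theorem on these two intervals, comparing `log W_{θ₂}` with `log W_{θ₁}`, shows that
`log W_{θ₂}` increases by more on `[c, u]` than on `[v, 1]`, i.e. `W_{θ₂}(c) < W_{θ₂}(u) W_{θ₂}(v)`,
as soon as the ratio of derivatives `m(θ₂ x) / m(θ₁ x)`, with `m(t) = t / (e^t - 1)`, is strictly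
decreasing in `x > 0`. This in turn holds because `t ↦ m(r t) / m(t)` is strictly decreasing for
`r > 1`, which is a weighted AM-GM inequality for `exp`.
-/

open Real Set

noncomputable def divExpSubOne (t : ℝ) : ℝ := if t = 0 then 1 else t / (exp t - 1)

@[simp] lemma divExpSubOne_zero : divExpSubOne 0 = 1 := if_pos rfl

lemma divExpSubOne_of_ne {t : ℝ} (ht : t ≠ 0) : divExpSubOne t = t / (exp t - 1) := if_neg ht

lemma exp_sub_one_ne_zero {t : ℝ} (ht : t ≠ 0) : exp t - 1 ≠ 0 :=
  sub_ne_zero.2 fun h => ht (exp_eq_one_iff t |>.1 h)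

lemma div_exp_sub_one_pos {t : ℝ} (ht : t ≠ 0) : 0 < t / (exp t - 1) := by
  rcases ht.lt_or_gt with h | h
  · exact div_pos_of_neg_of_neg h (by linarith [exp_lt_one_iff.2 h])
  · exact div_pos h (by linarith [add_one_lt_exp h.ne'])

lemma divExpSubOne_pos (t : ℝ) : 0 < divExpSubOne t := by
  by_cases ht : t = 0
  · simp [ht]
  · rw [divExpSubOne_of_ne ht]; exact div_exp_sub_one_pos ht

lemma divExpSubOne_strictAnti : StrictAnti divExpSubOne := by
  intro s t hst
  rcases eq_or_ne s 0 with rfl | hs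
  · rw [divExpSubOne_of_ne hst.ne', divExpSubOne_zero,
      div_lt_one (by linarith [add_one_lt_exp hst.ne'])]
    linarith [add_one_lt_exp hst.ne']
  rcases eq_or_ne t 0 with rfl | ht
  · rw [divExpSubOne_of_ne hs, divExpSubOne_zero,
      one_lt_div_of_neg (by linarith [exp_lt_one_iff.2 hst])]
    linarith [add_one_lt_exp hs]
  rw [divExpSubOne_of_ne hs, divExpSubOne_of_ne ht, ← inv_div, ← inv_div (exp s - 1)]
  refine inv_strictAnti₀ (inv_pos.1 ?_) ?_
  · rw [inv_div]; exact div_exp_sub_one_pos hs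
  · simpa using strictConvexOn_exp.secant_strict_mono (mem_univ 0) (mem_univ s) (mem_univ t)
      hs ht hst

lemma exp_sub_one_div_exp_mul_sub_one_strictAntiOn {r : ℝ} (hr : 1 < r) {D : Set ℝ}
    (hD : Convex ℝ D) (h0 : 0 ∉ D) :
    StrictAntiOn (fun t => (exp t - 1) / (exp (r * t) - 1)) D := by
  have hne : ∀ t ∈ D, exp (r * t) - 1 ≠ 0 := fun t ht =>
    exp_sub_one_ne_zero (mul_ne_zero (by linarith) (ne_of_mem_of_not_mem ht h0))
  have hderiv : ∀ t ∈ D, HasDerivAt (fun t => (exp t - 1) / (exp (r * t) - 1))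
      ((exp t * (exp (r * t) - 1) - (exp t - 1) * (exp (r * t) * r)) / (exp (r * t) - 1) ^ 2) t :=
    fun t ht => ((hasDerivAt_exp t).sub_const 1).div
      (((hasDerivAt_exp (r * t)).comp t ((hasDerivAt_id t).const_mul r)).sub_const 1 |>.congr_deriv
        (by simp)) (hne t ht)
  refine strictAntiOn_of_deriv_neg hD (fun t ht => (hderiv t ht).continuousAt.continuousWithinAt)
    fun t ht => ?_
  have htD := interior_subset ht
  have ht0 : t ≠ 0 := ne_of_mem_of_not_mem htD h0
  rw [(hderiv t htD).deriv]
  refine div_neg_of_neg_of_pos ?_ (pow_two_pos_of_ne_zero (hne t htD))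
  -- weighted AM-GM: (r - 1) t is the convex combination (1/r) • 0 + (1 - 1/r) • (r t)
  have hamgm : r * exp ((r - 1) * t) < 1 + (r - 1) * exp (r * t) := by
    have hr0 : 0 < r := by linarith
    have := strictConvexOn_exp.2 (mem_univ 0) (mem_univ (r * t))
      (mul_ne_zero hr0.ne' ht0).symm (one_div_pos.2 hr0)
      (sub_pos.2 ((div_lt_one hr0).2 hr)) (add_sub_cancel _ _)
    simp only [smul_eq_mul, mul_zero, zero_add, exp_zero, mul_one] at this
    rw [show (1 - 1 / r) * (r * t) = (r - 1) * t by field_simp] at this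
    field_simp at this
    linarith
  have hsplit : exp (r * t) = exp ((r - 1) * t) * exp t := by rw [← exp_add]; ring_nf
  rw [hsplit] at hamgm ⊢
  nlinarith [mul_lt_mul_of_pos_right hamgm (exp_pos t)]

lemma divExpSubOne_mul_div_strictAnti {r : ℝ} (hr : 1 < r) :
    StrictAnti fun t => divExpSubOne (r * t) / divExpSubOne t := by
  have hr0 : 0 < r := by linarith
  have hQ : ∀ t ≠ 0,
      divExpSubOne (r * t) / divExpSubOne t = r * ((exp t - 1) / (exp (r * t) - 1)) := by
    intro t ht
    have hrt : r * t ≠ 0 := mul_ne_zero hr0.ne' ht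
    rw [divExpSubOne_of_ne ht, divExpSubOne_of_ne hrt]
    field_simp [exp_sub_one_ne_zero ht, exp_sub_one_ne_zero hrt]
  have hanti : ∀ D : Set ℝ, Convex ℝ D → 0 ∉ D →
      StrictAntiOn (fun t => divExpSubOne (r * t) / divExpSubOne t) D := by
    intro D hD h0 s hs t ht hst
    simp only [hQ s (ne_of_mem_of_not_mem hs h0), hQ t (ne_of_mem_of_not_mem ht h0)]
    exact mul_lt_mul_of_pos_left
      (exp_sub_one_div_exp_mul_sub_one_strictAntiOn hr hD h0 hs ht hst) hr0
  refine StrictAntiOn.Iic_union_Ici (a := 0) (fun s hs t ht hst => ?_) (fun s hs t ht hst => ?_)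
  · rcases (mem_Iic.1 ht).lt_or_eq with ht | rfl
    · exact hanti (Iio 0) (convex_Iio 0) (by simp) (hst.trans ht) ht hst
    · simp only [mul_zero, divExpSubOne_zero, div_one]
      exact (one_lt_div (divExpSubOne_pos s)).2 (divExpSubOne_strictAnti (by nlinarith))
  · rcases (mem_Ici.1 hs).lt_or_eq with hs | rfl
    · exact hanti (Ioi 0) (convex_Ioi 0) (by simp) hs (hs.trans hst) hst
    · simp only [mul_zero, divExpSubOne_zero, div_one]
      exact (div_lt_one (divExpSubOne_pos t)).2 (divExpSubOne_strictAnti (by nlinarith))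

lemma divExpSubOne_mul_div_mul_strictAntiOn {a b : ℝ} (hab : a < b) :
    StrictAntiOn (fun x => divExpSubOne (b * x) / divExpSubOne (a * x)) (Ioi 0) := by
  intro x hx y hy hxy
  have hx : 0 < x := hx
  have hratio := divExpSubOne_mul_div_strictAnti (r := y / x) ((one_lt_div hx).2 hxy)
    (mul_lt_mul_of_pos_right hab hx)
  simp only [show ∀ c, y / x * (c * x) = c * y by intro c; field_simp] at hratio
  have hpos := divExpSubOne_pos
  rw [div_lt_div_iff₀ (hpos _) (hpos _)] at hratio ⊢
  linarith

theorem sub_lt_sub_of_strictAntiOn_div_deriv {f g f' g' : ℝ → ℝ} {a b c d : ℝ}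
    (hab : a < b) (hbc : b ≤ c) (hcd : c < d)
    (hf : ∀ x ∈ Icc a d, HasDerivAt f (f' x) x) (hg : ∀ x ∈ Icc a d, HasDerivAt g (g' x) x)
    (hg' : ∀ x ∈ Icc a d, 0 < g' x) (hρ : StrictAntiOn (fun x => f' x / g' x) (Icc a d))
    (heq : g b - g a = g d - g c) : f d - f c < f b - f a := by
  have hab' : Icc a b ⊆ Icc a d := Icc_subset_Icc le_rfl (by linarith)
  have hcd' : Icc c d ⊆ Icc a d := Icc_subset_Icc (by linarith) le_rfl
  have hcont : ∀ {h h' : ℝ → ℝ}, (∀ x ∈ Icc a d, HasDerivAt h (h' x) x) →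
      ContinuousOn h (Icc a d) :=
    fun hh x hx => (hh x hx).continuousAt.continuousWithinAt
  have cauchy : ∀ {p q}, p < q → Icc p q ⊆ Icc a d →
      ∃ ξ ∈ Ioo p q, (g q - g p) * f' ξ = (f q - f p) * g' ξ := fun hpq hsub =>
    exists_ratio_hasDerivAt_eq_ratio_slope f f' hpq ((hcont hf).mono hsub)
      (fun x hx => hf x (hsub (Ioo_subset_Icc_self hx))) g g' ((hcont hg).mono hsub)
      (fun x hx => hg x (hsub (Ioo_subset_Icc_self hx)))
  obtain ⟨ξ, hξ, hgξ⟩ := exists_hasDerivAt_eq_slope g g' hab ((hcont hg).mono hab')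
    fun x hx => hg x (hab' (Ioo_subset_Icc_self hx))
  have hΔ : 0 < g b - g a := by
    have := hg' ξ (hab' (Ioo_subset_Icc_self hξ))
    rwa [hgξ, div_pos_iff_of_pos_right (sub_pos.2 hab)] at this
  obtain ⟨ξ₁, hξ₁, e₁⟩ := cauchy hab hab'
  obtain ⟨ξ₂, hξ₂, e₂⟩ := cauchy hcd hcd'
  have hξ₁' := hab' (Ioo_subset_Icc_self hξ₁)
  have hξ₂' := hcd' (Ioo_subset_Icc_self hξ₂)
  have h₁ : f b - f a = (g b - g a) * (f' ξ₁ / g' ξ₁) := by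
    field_simp [(hg' ξ₁ hξ₁').ne']; linarith
  have h₂ : f d - f c = (g b - g a) * (f' ξ₂ / g' ξ₂) := by
    rw [heq]; field_simp [(hg' ξ₂ hξ₂').ne']; linarith
  rw [h₁, h₂]
  exact mul_lt_mul_of_pos_left (hρ hξ₁' hξ₂' (by linarith [hξ₁.2, hξ₂.1])) hΔ

noncomputable def frankMulGen (θ x : ℝ) : ℝ :=
  if θ = 0 then x else (exp (-θ * x) - 1) / (exp (-θ) - 1)

lemma frankMulGen_of_ne {θ : ℝ} (hθ : θ ≠ 0) (x : ℝ) :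
    frankMulGen θ x = (exp (-θ * x) - 1) / (exp (-θ) - 1) := if_neg hθ

lemma hasDerivAt_frankMulGen (θ x : ℝ) :
    HasDerivAt (frankMulGen θ) (divExpSubOne (-θ) * exp (-θ * x)) x := by
  rcases eq_or_ne θ 0 with rfl | hθ
  · rw [show frankMulGen 0 = id from funext fun _ => if_pos rfl]
    simpa using hasDerivAt_id x
  rw [funext (frankMulGen_of_ne hθ), divExpSubOne_of_ne (neg_ne_zero.2 hθ)]
  exact (((hasDerivAt_exp _).comp x ((hasDerivAt_id x).const_mul (-θ))).sub_const 1).div_const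
    (exp (-θ) - 1) |>.congr_deriv (by simp only [id, mul_one]; ring)

lemma frankMulGen_strictMono (θ : ℝ) : StrictMono (frankMulGen θ) :=
  strictMono_of_hasDerivAt_pos (hasDerivAt_frankMulGen θ) fun _ =>
    mul_pos (divExpSubOne_pos _) (exp_pos _)

@[simp] lemma frankMulGen_zero_right (θ : ℝ) : frankMulGen θ 0 = 0 := by
  simp [frankMulGen]

@[simp] lemma frankMulGen_one_right (θ : ℝ) : frankMulGen θ 1 = 1 := by
  rcases eq_or_ne θ 0 with rfl | hθ
  · simp [frankMulGen]
  · rw [frankMulGen_of_ne hθ, mul_one, div_self (exp_sub_one_ne_zero (neg_ne_zero.2 hθ))]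

lemma frankMulGen_pos (θ : ℝ) {x : ℝ} (hx : 0 < x) : 0 < frankMulGen θ x := by
  simpa using frankMulGen_strictMono θ hx

lemma frankMulGen_lt_one (θ : ℝ) {x : ℝ} (hx : x < 1) : frankMulGen θ x < 1 := by
  simpa using frankMulGen_strictMono θ hx

lemma hasDerivAt_log_frankMulGen (θ : ℝ) {x : ℝ} (hx : 0 < x) :
    HasDerivAt (fun y => log (frankMulGen θ y)) (divExpSubOne (θ * x) / x) x := by
  convert (hasDerivAt_frankMulGen θ x).log (frankMulGen_pos θ hx).ne' using 1
  rcases eq_or_ne θ 0 with rfl | hθ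
  · simp [frankMulGen]
  have hθx : θ * x ≠ 0 := mul_ne_zero hθ hx.ne'
  rw [divExpSubOne_of_ne hθx, divExpSubOne_of_ne (neg_ne_zero.2 hθ), frankMulGen_of_ne hθ, neg_mul]
  have := exp_sub_one_ne_zero hθx
  have := exp_sub_one_ne_zero (neg_ne_zero.2 hθ)
  have := exp_sub_one_ne_zero (neg_ne_zero.2 hθx)
  have hinv : exp (-(θ * x)) * exp (θ * x) = 1 := by rw [← exp_add]; simp
  field_simp
  linear_combination hinv

lemma frankMulGen_frankCopula {θ u v : ℝ} (hθ : θ ≠ 0) (hu : u ∈ Ioo 0 1) (hv : v ∈ Ioo 0 1) :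
    frankMulGen θ (frankCopula θ u v) = frankMulGen θ u * frankMulGen θ v := by
  have hD := exp_sub_one_ne_zero (neg_ne_zero.2 hθ)
  have hu₀ := frankMulGen_pos θ hu.1
  have hv₀ := frankMulGen_pos θ hv.1
  have hu₁ := frankMulGen_lt_one θ hu.2
  have hv₁ := frankMulGen_lt_one θ hv.2
  set p := frankMulGen θ u * frankMulGen θ v with hp
  have hp₁ : p < 1 := mul_lt_one_of_nonneg_of_lt_one_left hu₀.le hu₁ hv₁.le
  have hpos : 0 < 1 + (exp (-θ) - 1) * p := by nlinarith [exp_pos (-θ), mul_pos hu₀ hv₀]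
  have hC : frankCopula θ u v = -(1 / θ) * log (1 + (exp (-θ) - 1) * p) := by
    rw [frankCopula, hp, frankMulGen_of_ne hθ, frankMulGen_of_ne hθ]
    field_simp
  rw [hC, frankMulGen_of_ne hθ, show -θ * (-(1 / θ) * log (1 + (exp (-θ) - 1) * p))
    = log (1 + (exp (-θ) - 1) * p) by field_simp, exp_log hpos]
  field_simp
  ring

lemma frankMulGen_frankCopulaExt (θ : ℝ) {u v : ℝ} (hu : u ∈ Ioo 0 1) (hv : v ∈ Ioo 0 1) :
    frankMulGen θ (frankCopulaExt θ u v) = frankMulGen θ u * frankMulGen θ v := by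
  rcases eq_or_ne θ 0 with rfl | hθ
  · simp [frankCopulaExt, frankMulGen]
  · rw [frankCopulaExt, if_neg hθ, frankMulGen_frankCopula hθ hu hv]

lemma frankMulGen_lt_mul_of_eq_mul {θ₁ θ₂ c u v : ℝ} (hθ : θ₁ < θ₂) (hu : u ∈ Ioo 0 1)
    (hv : v ∈ Ioo 0 1) (hc : frankMulGen θ₁ c = frankMulGen θ₁ u * frankMulGen θ₁ v) :
    frankMulGen θ₂ c < frankMulGen θ₂ u * frankMulGen θ₂ v := by
  wlog huv : u ≤ v generalizing u v
  · rw [mul_comm]; exact this hv hu (hc.trans (mul_comm _ _)) (le_of_not_ge huv)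
  have hu₀ := frankMulGen_pos θ₁ hu.1
  have hv₀ := frankMulGen_pos θ₁ hv.1
  have hv₁ := frankMulGen_lt_one θ₁ hv.2
  have hc₀ : 0 < c := (frankMulGen_strictMono θ₁).lt_iff_lt.1 <| by
    rw [frankMulGen_zero_right, hc]; exact mul_pos hu₀ hv₀
  have hcu : c < u := (frankMulGen_strictMono θ₁).lt_iff_lt.1 <| by
    rw [hc]; exact mul_lt_of_lt_one_right hu₀ hv₁
  have hρ : StrictAntiOn (fun x => divExpSubOne (θ₂ * x) / x / (divExpSubOne (θ₁ * x) / x))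
      (Icc c 1) :=
    ((divExpSubOne_mul_div_mul_strictAntiOn hθ).mono fun x hx => hc₀.trans_le hx.1).congr
      fun x hx => (div_div_div_cancel_right₀ (hc₀.trans_le hx.1).ne' _ _).symm
  have hlog := sub_lt_sub_of_strictAntiOn_div_deriv hcu huv hv.2
    (fun x hx => hasDerivAt_log_frankMulGen θ₂ (hc₀.trans_le hx.1))
    (fun x hx => hasDerivAt_log_frankMulGen θ₁ (hc₀.trans_le hx.1))
    (fun x hx => div_pos (divExpSubOne_pos _) (hc₀.trans_le hx.1)) hρ
    (by rw [hc, log_mul hu₀.ne' hv₀.ne', frankMulGen_one_right, log_one]; ring)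
  have hu₂ := frankMulGen_pos θ₂ hu.1
  have hv₂ := frankMulGen_pos θ₂ hv.1
  rw [← log_lt_log_iff (frankMulGen_pos θ₂ hc₀) (mul_pos hu₂ hv₂), log_mul hu₂.ne' hv₂.ne']
  rw [frankMulGen_one_right, log_one] at hlog
  linarith

lemma frankCopulaExt_strictMono {u v : ℝ} (hu : u ∈ Ioo 0 1) (hv : v ∈ Ioo 0 1) :
    StrictMono fun θ => frankCopulaExt θ u v := fun θ₁ θ₂ hθ =>
  (frankMulGen_strictMono θ₂).lt_iff_lt.1 <| by
    rw [frankMulGen_frankCopulaExt θ₂ hu hv]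
    exact frankMulGen_lt_mul_of_eq_mul hθ hu hv (frankMulGen_frankCopulaExt θ₁ hu hv)

/-- For fixed (u,v) ∈ (0,1)², C_θ(u,v) is strictly increasing in θ; in particular
C_θ(u,v) > uv for θ > 0 and C_θ(u,v) < uv for θ < 0. -/
theorem frank_strictMono_in_theta (u v : ℝ)
    (hu : u ∈ Set.Ioo (0:ℝ) 1) (hv : v ∈ Set.Ioo (0:ℝ) 1) :
    (∀ θ₁ θ₂ : ℝ, θ₁ < θ₂ → frankCopulaExt θ₁ u v < frankCopulaExt θ₂ u v) ∧
    (∀ θ : ℝ, (0 < θ → u * v < frankCopula θ u v) ∧ (θ < 0 → frankCopula θ u v < u * v)) := by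
  refine ⟨fun _ _ h => frankCopulaExt_strictMono hu hv h, fun θ => ⟨fun hθ => ?_, fun hθ => ?_⟩⟩
  · simpa [frankCopulaExt, hθ.ne'] using frankCopulaExt_strictMono hu hv hθ
  · simpa [frankCopulaExt, hθ.ne] using frankCopulaExt_strictMono hu hv hθ
end
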